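/- Let K be an H-operator-valued kernel on X which is Γ-invariant and partially positive semidefinite with respect to the partition {X_s}_{s∈S}. For s ∈ S let K^s := K|_{X_s × X_s} (a positive semidefinite kernel on X_s), let ℛ_{K^s} be its reproducing kernel Hilbert space, and let D_s := span{K^s_x h : x ∈ X_s, h ∈ H_x} ⊆ ℛ_{K^s}. Then for each α ∈ Γ the formula (Φ(α)f)(x) := f(α*·x) (x ∈ X_{c(α)}) defines a linear map Φ(α) : D_{d(α)} → D_{c(α)}, and the family {Φ(α)}_{α∈Γ} is the unique one satisfying Φ(α) K^{d(α)}_x h = K^{c(α)}_{α·x} h for all α ∈ Γ, x ∈ X_{d(α)}, h ∈ H_x. Moreover, Φ(αβ)|_{D_{d(β)}} = Φ(α)Φ(β)|_{D_{d(β)}} for every composable pair (α,β), and ⟨Φ(α)f, g⟩_{ℛ_{K^{c(α)}}} = ⟨f, Φ(α*)g⟩_{ℛ_{K^{d(α)}}} for all f ∈ D_{d(α)} and g ∈ D_{c(α)}. -/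

import Mathlib

/-!
Γ-invariance of `K` says exactly that pulling the kernel section `K_x h` back along
`y ↦ α*·y` gives `K_{α·x} h`. Hence the pullback maps `D_{d(α)}` into `D_{c(α)}`, which defines
`Φ(α)`. Any linear map on `D_s` is determined by its values on the spanning kernel sections,
which gives uniqueness; multiplicativity is `(αβ)*·y = β*·(α*·y)`, and the adjoint relation
reduces on kernel sections to the reproducing property.
-/

open scoped InnerProductSpace

noncomputable section

universe u uΓ uS v vO w

/-- A `*`-semigroupoid: partially defined multiplication (the product `mul α β`
is subject to the axioms only when `d α = c β`) together with an involution. -/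
structure StarSgd (Γ : Type uΓ) (S : Type uS) where
  d : Γ → S
  c : Γ → S
  mul : Γ → Γ → Γ
  star : Γ → Γ
  d_mul : ∀ {α β : Γ}, d α = c β → d (mul α β) = d β
  c_mul : ∀ {α β : Γ}, d α = c β → c (mul α β) = c α
  mul_assoc : ∀ {α β γ : Γ}, d α = c β → d β = c γ →
    mul α (mul β γ) = mul (mul α β) γ
  d_star : ∀ α, d (star α) = c α
  c_star : ∀ α, c (star α) = d α
  star_star : ∀ α, star (star α) = α
  star_mul : ∀ {α β : Γ}, d α = c β → star (mul α β) = mul (star β) (star α)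

/-- A left action of a semigroupoid on a set `X`, with surjective anchor `a`;
`act α x` is subject to the axioms only when `d α = a x`. -/
structure SgdAction (Γ : Type uΓ) (S : Type uS) (X : Type v) (G : StarSgd Γ S) where
  a : X → S
  a_surj : Function.Surjective a
  act : Γ → X → X
  a_act : ∀ {α : Γ} {x : X}, G.d α = a x → a (act α x) = G.c α
  act_mul : ∀ {α β : Γ} {x : X}, G.d β = a x → G.d α = G.c β →
    act (G.mul α β) x = act α (act β x)

variable {𝕜 : Type u} [RCLike 𝕜] {Γ : Type uΓ} {S : Type uS} {X : Type v}
  {O : Type vO} {E : O → Type w}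
  [∀ o, NormedAddCommGroup (E o)] [∀ o, InnerProductSpace 𝕜 (E o)]
  [∀ o, CompleteSpace (E o)]

/-- Transport along an equality of indices: since the Hilbert bundle over `X`
is given as a pullback `x ↦ E (p x)`, equal indices give literally the same
Hilbert space, and the transport is a linear isometry. -/
def castE (𝕜 : Type u) [RCLike 𝕜] {O : Type vO} (E : O → Type w)
    [∀ o, NormedAddCommGroup (E o)] [∀ o, InnerProductSpace 𝕜 (E o)]
    {o o' : O} (h : o = o') : E o ≃ₗᵢ[𝕜] E o' := by
  subst h; exact LinearIsometryEquiv.refl 𝕜 (E o)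

variable {G : StarSgd Γ S} (A : SgdAction Γ S X G) (p : X → O)

/-- `K` is partially Hermitian with respect to the partition of `X` into the
fibres of the anchor map. -/
def PartHermitian (K : ∀ y x : X, E (p x) →L[𝕜] E (p y)) : Prop :=
  ∀ x y : X, A.a x = A.a y → ContinuousLinearMap.adjoint (K x y) = K y x

/-- `K` is partially positive semidefinite with respect to the partition of
`X` into the fibres of the anchor map. -/
def PartPSD (K : ∀ y x : X, E (p x) →L[𝕜] E (p y)) : Prop :=
  PartHermitian A p K ∧
  ∀ (s : S) (n : ℕ) (x : Fin n → X), (∀ i, A.a (x i) = s) →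
    ∀ h : ∀ i, E (p (x i)),
      0 ≤ RCLike.re (∑ i, ∑ j, ⟪K (x j) (x i) (h i), h j⟫_𝕜)

variable (hp : ∀ {α : Γ} {x : X}, G.d α = A.a x → p (A.act α x) = p x)

/-- `K` is `Γ`-invariant: `K(α·x, y) = K(x, α*·y)`, expressed using the
transport isometries coming from the constancy of the bundle on orbits. -/
def GammaInvariant (K : ∀ y x : X, E (p x) →L[𝕜] E (p y)) : Prop :=
  ∀ (α : Γ) (x y : X) (hx : G.d α = A.a x) (hy : G.c α = A.a y) (k : E (p y)),
    castE 𝕜 E (hp hx) (K (A.act α x) y k) =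
      K x (A.act (G.star α) y)
        ((castE 𝕜 E (hp ((G.d_star α).trans hy))).symm k)

/-- `K` is of bounded shift type: for every `α` there is `M_α ≥ 0` dominating
the shifted quadratic forms by the original ones (stated via finite families of
points in the fibre `X_{d(α)}`). -/
def BoundedShiftType (K : ∀ y x : X, E (p x) →L[𝕜] E (p y)) : Prop :=
  ∀ α : Γ, ∃ M : ℝ, 0 ≤ M ∧
    ∀ (n : ℕ) (z : Fin n → X) (hz : ∀ i, G.d α = A.a (z i))
      (g : ∀ i, E (p (z i))),
      RCLike.re (∑ i, ∑ j, ⟪K (A.act α (z j)) (A.act α (z i))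
          ((castE 𝕜 E (hp (hz i))).symm (g i)),
          (castE 𝕜 E (hp (hz j))).symm (g j)⟫_𝕜) ≤
        M * RCLike.re (∑ i, ∑ j, ⟪K (z j) (z i) (g i), g j⟫_𝕜)

universe w'

/-- A reproducing kernel Hilbert space of sections over the fibre
`X_s = a⁻¹({s})`, with kernel the restriction of `K` to `X_s × X_s`:
a Hilbert space embedded injectively and linearly into the sections on `X_s`,
containing the kernel sections `K_x h` and with the reproducing property. -/
structure RKHSOn (𝕜 : Type u) [RCLike 𝕜] {Γ : Type uΓ} {S : Type uS}
    {X : Type v} {O : Type vO} (E : O → Type w)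
    [∀ o, NormedAddCommGroup (E o)] [∀ o, InnerProductSpace 𝕜 (E o)]
    [∀ o, CompleteSpace (E o)]
    {G : StarSgd Γ S} (A : SgdAction Γ S X G) (p : X → O)
    (K : ∀ y x : X, E (p x) →L[𝕜] E (p y)) (s : S) :
    Type (max u v w (w' + 1)) where
  carrier : Type w'
  [ng : NormedAddCommGroup carrier]
  [ip : InnerProductSpace 𝕜 carrier]
  [cs : CompleteSpace carrier]
  emb : carrier →ₗ[𝕜] ∀ x : {x : X // A.a x = s}, E (p x.val)
  emb_inj : Function.Injective emb
  Kx : ∀ x : {x : X // A.a x = s}, E (p x.val) → carrier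
  emb_Kx : ∀ (x : {x : X // A.a x = s}) (h : E (p x.val))
    (y : {x : X // A.a x = s}), emb (Kx x h) y = K y.val x.val h
  repro : ∀ (f : carrier) (x : {x : X // A.a x = s}) (h : E (p x.val)),
    ⟪emb f x, h⟫_𝕜 = ⟪f, Kx x h⟫_𝕜

attribute [instance] RKHSOn.ng RKHSOn.ip RKHSOn.cs

variable (K : ∀ y x : X, E (p x) →L[𝕜] E (p y))

/-- The dense subspaces `D_s := span{K^s_x h}` of the reproducing kernel
Hilbert spaces. -/
def Dspan (R : ∀ s : S, RKHSOn.{u, uΓ, uS, v, vO, w, w'} 𝕜 E A p K s) (s : S) :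
    Submodule 𝕜 (R s).carrier :=
  Submodule.span 𝕜 (⋃ x : {x : X // A.a x = s}, Set.range ((R s).Kx x))

/-- Transport between the subspaces `D_s` along an equality of indices. -/
def castD {R : ∀ s : S, RKHSOn.{u, uΓ, uS, v, vO, w, w'} 𝕜 E A p K s}
    {s t : S} (h : s = t) : ↥(Dspan A p K R s) ≃ₗ[𝕜] ↥(Dspan A p K R t) := by
  subst h; exact LinearEquiv.refl 𝕜 _

omit [∀ o, CompleteSpace (E o)] in
@[simp]
lemma castE_castE {o₁ o₂ o₃ : O} (h : o₁ = o₂) (h' : o₂ = o₃) (k : E o₁) :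
    castE 𝕜 E h' (castE 𝕜 E h k) = castE 𝕜 E (h.trans h') k := by
  subst h h'; rfl

lemma SgdAction.act_star_mul {α β : Γ} {x : X}
    (hc : G.d α = G.c β) (hx : G.c α = A.a x) :
    A.act (G.star (G.mul α β)) x = A.act (G.star β) (A.act (G.star α) x) := by
  rw [G.star_mul hc]
  exact A.act_mul ((G.d_star α).trans hx) ((G.d_star β).trans (hc.symm.trans (G.c_star α).symm))

section Shift

variable {A p K}

omit [∀ o, CompleteSpace (E o)] in
lemma GammaInvariant.kernel_act_eq (hKinv : GammaInvariant A p hp K) {α : Γ} {x y : X}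
    (hx : G.d α = A.a x) (hy : G.c α = A.a y) (h : E (p x)) :
    K y (A.act α x) ((castE 𝕜 E (hp hx)).symm h) =
      castE 𝕜 E (hp ((G.d_star α).trans hy)) (K (A.act (G.star α) y) x h) := by
  have act_congr : ∀ (γ : Γ) (hγ : γ = α) (hγx : G.d γ = A.a x),
      K y (A.act γ x) ((castE 𝕜 E (hp hγx)).symm h) =
        K y (A.act α x) ((castE 𝕜 E (hp hx)).symm h) := by
    rintro _ rfl _; rfl
  rw [hKinv (G.star α) y x ((G.d_star α).trans hy) ((G.c_star α).trans hx) h]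
  exact (act_congr _ (G.star_star α) ((G.d_star _).trans ((G.c_star α).trans hx))).symm

variable (𝕜) in
/-- The formula `(Φ(α)F)(x) = F(α*·x)`, on all sections rather than on `D_{d(α)}`. -/
def pullbackSections (α : Γ) :
    (∀ x : {x : X // A.a x = G.d α}, E (p x.val)) →ₗ[𝕜]
      ∀ x : {x : X // A.a x = G.c α}, E (p x.val) where
  toFun F x := castE 𝕜 E (hp ((G.d_star α).trans x.2.symm))
    (F ⟨A.act (G.star α) x.1, (A.a_act ((G.d_star α).trans x.2.symm)).trans (G.c_star α)⟩)
  map_add' F F' := by funext x; simp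
  map_smul' c F := by funext x; simp

variable {R : ∀ s : S, RKHSOn.{u, uΓ, uS, v, vO, w, w'} 𝕜 E A p K s}

variable (R) in
lemma Kx_mem_Dspan {s : S} (x : {x : X // A.a x = s}) (k : E (p x.val)) :
    (R s).Kx x k ∈ Dspan A p K R s :=
  Submodule.subset_span (Set.mem_iUnion.mpr ⟨x, Set.mem_range_self k⟩)

lemma Dspan.linearMap_ext {M : Type*} [AddCommMonoid M] [Module 𝕜 M] {s : S}
    {φ ψ : ↥(Dspan A p K R s) →ₗ[𝕜] M}
    (h : ∀ (x : X) (hx : A.a x = s) (k : E (p x)),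
      φ ⟨(R s).Kx ⟨x, hx⟩ k, Kx_mem_Dspan R ⟨x, hx⟩ k⟩ =
        ψ ⟨(R s).Kx ⟨x, hx⟩ k, Kx_mem_Dspan R ⟨x, hx⟩ k⟩) :
    φ = ψ := by
  refine LinearMap.ext_on (Submodule.span_span_coe_preimage
    (s := ⋃ y : {x : X // A.a x = s}, Set.range ((R s).Kx y))) ?_
  intro f hf
  obtain ⟨⟨x, hx⟩, k, hk⟩ := Set.mem_iUnion.mp hf
  obtain rfl : f = ⟨_, Kx_mem_Dspan R ⟨x, hx⟩ k⟩ := Subtype.ext hk.symm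
  exact h x hx k

lemma emb_castD {s t : S} (h : s = t) (f : ↥(Dspan A p K R s)) (x : X) (hx : A.a x = t) :
    (R t).emb ↑(castD A p K h f) ⟨x, hx⟩ = (R s).emb ↑f ⟨x, hx.trans h.symm⟩ := by
  subst h; rfl

lemma castD_Kx {s t : S} (h : s = t) (x : X) (hx : A.a x = s) (k : E (p x)) :
    castD A p K h ⟨(R s).Kx ⟨x, hx⟩ k, Kx_mem_Dspan R ⟨x, hx⟩ k⟩ =
      ⟨(R t).Kx ⟨x, hx.trans h⟩ k, Kx_mem_Dspan R ⟨x, hx.trans h⟩ k⟩ := by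
  subst h; rfl

omit [∀ o, CompleteSpace (E o)] in
lemma castE_apply_congr {s : S} (F : ∀ x : {x : X // A.a x = s}, E (p x.val)) {x x' : X}
    (hxx : x = x') (hx : A.a x = s) (hx' : A.a x' = s) {o : O} (e : p x = o) (e' : p x' = o) :
    castE 𝕜 E e (F ⟨x, hx⟩) = castE 𝕜 E e' (F ⟨x', hx'⟩) := by
  subst hxx; rfl

variable (R) in
lemma embD_injective (s : S) :
    Function.Injective ((R s).emb ∘ₗ (Dspan A p K R s).subtype) :=
  (R s).emb_inj.comp Subtype.val_injective

lemma pullbackSections_emb_Kx (hKinv : GammaInvariant A p hp K) {α : Γ} {x : X}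
    (hx : G.d α = A.a x) (k : E (p x)) :
    pullbackSections 𝕜 hp α ((R (G.d α)).emb ((R (G.d α)).Kx ⟨x, hx.symm⟩ k)) =
      (R (G.c α)).emb ((R (G.c α)).Kx ⟨A.act α x, A.a_act hx⟩ ((castE 𝕜 E (hp hx)).symm k)) := by
  funext y
  simp only [pullbackSections, LinearMap.coe_mk, AddHom.coe_mk, RKHSOn.emb_Kx]
  exact (hKinv.kernel_act_eq hp hx y.2.symm k).symm

lemma pullbackSections_emb_mem_range (hKinv : GammaInvariant A p hp K) (α : Γ)
    (f : ↥(Dspan A p K R (G.d α))) :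
    pullbackSections 𝕜 hp α ((R (G.d α)).emb f) ∈
      LinearMap.range ((R (G.c α)).emb ∘ₗ (Dspan A p K R (G.c α)).subtype) := by
  suffices Dspan A p K R (G.d α) ≤ (LinearMap.range _).comap
      (pullbackSections 𝕜 hp α ∘ₗ (R (G.d α)).emb) from this f.2
  refine Submodule.span_le.mpr ?_
  intro _ hf
  obtain ⟨⟨x, hx⟩, k, rfl⟩ := Set.mem_iUnion.mp hf
  exact ⟨⟨_, Kx_mem_Dspan R _ _⟩, (pullbackSections_emb_Kx hp hKinv hx.symm k).symm⟩

variable (R) in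
/-- The operator `Φ(α) : D_{d(α)} → D_{c(α)}`; it is well defined because the pullback of a
kernel section is again a kernel section, and `emb` is injective on `D_{c(α)}`. -/
def Dshift (hKinv : GammaInvariant A p hp K) (α : Γ) :
    ↥(Dspan A p K R (G.d α)) →ₗ[𝕜] ↥(Dspan A p K R (G.c α)) :=
  (LinearEquiv.ofInjective _ (embD_injective R (G.c α))).symm.toLinearMap ∘ₗ
    (pullbackSections 𝕜 hp α ∘ₗ (R (G.d α)).emb ∘ₗ (Dspan A p K R (G.d α)).subtype).codRestrict
      _ (pullbackSections_emb_mem_range hp hKinv α)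

variable (hKinv : GammaInvariant A p hp K)

lemma emb_Dshift (α : Γ) (f : ↥(Dspan A p K R (G.d α))) :
    (R (G.c α)).emb (Dshift hp R hKinv α f) = pullbackSections 𝕜 hp α ((R (G.d α)).emb f) :=
  LinearEquiv.ofInjective_symm_apply (h := embD_injective R (G.c α)) _ _

lemma Dshift_Kx (α : Γ) (x : X) (hx : G.d α = A.a x) (k : E (p x)) :
    Dshift hp R hKinv α ⟨(R (G.d α)).Kx ⟨x, hx.symm⟩ k, Kx_mem_Dspan R ⟨x, hx.symm⟩ k⟩ =
      ⟨(R (G.c α)).Kx ⟨A.act α x, A.a_act hx⟩ ((castE 𝕜 E (hp hx)).symm k),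
        Kx_mem_Dspan R _ _⟩ :=
  Subtype.ext <| (R (G.c α)).emb_inj <|
    (emb_Dshift hp hKinv α _).trans (pullbackSections_emb_Kx hp hKinv hx k)

lemma Dshift_mul {α β : Γ} (hc : G.d α = G.c β) (f : ↥(Dspan A p K R (G.d β))) :
    Dshift hp R hKinv (G.mul α β) (castD A p K (G.d_mul hc).symm f) =
      castD A p K (G.c_mul hc).symm
        (Dshift hp R hKinv α (castD A p K hc.symm (Dshift hp R hKinv β f))) := by
  refine Subtype.ext <| (R _).emb_inj <| funext fun ⟨x, hx⟩ => ?_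
  have hαx : G.c α = A.a x := (G.c_mul hc).symm.trans hx.symm
  simp only [emb_castD, emb_Dshift, pullbackSections, LinearMap.coe_mk, AddHom.coe_mk,
    castE_castE]
  exact castE_apply_congr _ (A.act_star_mul hc hαx) _ _ _ _

lemma inner_Dshift (α : Γ) (f : ↥(Dspan A p K R (G.d α))) (g : ↥(Dspan A p K R (G.c α))) :
    ⟪(Dshift hp R hKinv α f : (R (G.c α)).carrier), (g : (R (G.c α)).carrier)⟫_𝕜 =
      ⟪(f : (R (G.d α)).carrier),
        (castD A p K (G.c_star α)
          (Dshift hp R hKinv (G.star α) (castD A p K (G.d_star α).symm g)) :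
            (R (G.d α)).carrier)⟫_𝕜 := by
  refine LinearMap.congr_fun (Dspan.linearMap_ext (R := R)
    (φ := innerₛₗ 𝕜 (Dshift hp R hKinv α f : (R (G.c α)).carrier) ∘ₗ Submodule.subtype _)
    (ψ := innerₛₗ 𝕜 (f : (R (G.d α)).carrier) ∘ₗ Submodule.subtype _ ∘ₗ
      (castD A p K (G.c_star α)).toLinearMap ∘ₗ Dshift hp R hKinv (G.star α) ∘ₗ
        (castD A p K (G.d_star α).symm).toLinearMap) fun x hx k => ?_) g
  have hx' : G.d (G.star α) = A.a x := (G.d_star α).trans hx.symm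
  simp only [LinearMap.comp_apply, LinearEquiv.coe_coe, Submodule.subtype_apply,
    innerₛₗ_apply_apply, castD_Kx, Dshift_Kx hp hKinv (G.star α) x hx']
  rw [← RKHSOn.repro, ← RKHSOn.repro, emb_Dshift]
  exact LinearIsometryEquiv.inner_map_eq_flip _ _ _

end Shift

theorem gen_star_representation_on_rkhs
    (hKinv : GammaInvariant A p hp K)
    (R : ∀ s : S, RKHSOn.{u, uΓ, uS, v, vO, w, w'} 𝕜 E A p K s) :
    ∃ Φ : ∀ α : Γ, ↥(Dspan A p K R (G.d α)) →ₗ[𝕜] ↥(Dspan A p K R (G.c α)),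
      (∀ (α : Γ) (f : ↥(Dspan A p K R (G.d α))) (x : X) (hx : G.c α = A.a x),
        (R (G.c α)).emb ↑(Φ α f) ⟨x, hx.symm⟩ =
          castE 𝕜 E (hp ((G.d_star α).trans hx))
            ((R (G.d α)).emb ↑f ⟨A.act (G.star α) x,
              (A.a_act ((G.d_star α).trans hx)).trans (G.c_star α)⟩)) ∧
      (∀ (α : Γ) (x : X) (hx : G.d α = A.a x) (h : E (p x)),
        Φ α ⟨(R (G.d α)).Kx ⟨x, hx.symm⟩ h,
            Submodule.subset_span
              (Set.mem_iUnion.mpr ⟨⟨x, hx.symm⟩, Set.mem_range_self h⟩)⟩ =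
          ⟨(R (G.c α)).Kx ⟨A.act α x, A.a_act hx⟩ ((castE 𝕜 E (hp hx)).symm h),
            Submodule.subset_span
              (Set.mem_iUnion.mpr ⟨⟨A.act α x, A.a_act hx⟩,
                Set.mem_range_self _⟩)⟩) ∧
      (∀ Φ' : ∀ α : Γ,
          ↥(Dspan A p K R (G.d α)) →ₗ[𝕜] ↥(Dspan A p K R (G.c α)),
        (∀ (α : Γ) (x : X) (hx : G.d α = A.a x) (h : E (p x)),
          Φ' α ⟨(R (G.d α)).Kx ⟨x, hx.symm⟩ h,
              Submodule.subset_span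
                (Set.mem_iUnion.mpr ⟨⟨x, hx.symm⟩, Set.mem_range_self h⟩)⟩ =
            ⟨(R (G.c α)).Kx ⟨A.act α x, A.a_act hx⟩
                ((castE 𝕜 E (hp hx)).symm h),
              Submodule.subset_span
                (Set.mem_iUnion.mpr ⟨⟨A.act α x, A.a_act hx⟩,
                  Set.mem_range_self _⟩)⟩) → Φ' = Φ) ∧
      (∀ (α β : Γ) (hc : G.d α = G.c β) (f : ↥(Dspan A p K R (G.d β))),
        Φ (G.mul α β) (castD A p K (G.d_mul hc).symm f) =
          castD A p K (G.c_mul hc).symm (Φ α (castD A p K hc.symm (Φ β f)))) ∧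
      (∀ (α : Γ) (f : ↥(Dspan A p K R (G.d α)))
          (g : ↥(Dspan A p K R (G.c α))),
        ⟪((Φ α f) : (R (G.c α)).carrier), (g : (R (G.c α)).carrier)⟫_𝕜 =
          ⟪(f : (R (G.d α)).carrier),
            ((castD A p K (G.c_star α)
              (Φ (G.star α) (castD A p K (G.d_star α).symm g))) :
                (R (G.d α)).carrier)⟫_𝕜) :=
  ⟨Dshift hp R hKinv, fun α f x hx => congrFun (emb_Dshift hp hKinv α f) ⟨x, hx.symm⟩,
    Dshift_Kx hp hKinv,
    fun _ hΦ' => funext fun α => Dspan.linearMap_ext fun x hx k =>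
      (hΦ' α x hx.symm k).trans (Dshift_Kx hp hKinv α x hx.symm k).symm,
    fun _ _ => Dshift_mul hp hKinv, inner_Dshift hp hKinv⟩
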